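/- Let k be an algebraic extension of F_q. The vanishing ideal over k of the set P^m(F_q) of F_q-rational points of P^m(k) is the ideal Γ_q(k) of k[x_0,...,x_m] generated by the Fermat polynomials x_i^q x_j - x_i x_j^q for 0 ≤ i < j ≤ m. -/

import Mathlib

/-!
Modulo the Fermat ideal, `x_i ^ q * x_ℓ = x_i * x_ℓ ^ q` lets one move `q - 1` from the exponent
of `x_i` to that of a variable `x_ℓ` occurring in the monomial. Doing this for every `i` below the
top variable `x_ℓ` of each monomial turns a homogeneous `F` into its projective reduction `G`, of
the same degree and congruent to `F`, whose exponents below the top variable are all `< q`.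
If `F` vanishes on `P^m(F_q)` then so does `G`, and `G = 0` by induction on `ℓ`: the part of `G`
supported on `x_0, …, x_ℓ` dehomogenized at `x_ℓ = 1` vanishes on all of `F_q^(m+1)` and has degree
`< q` in each variable, so it is zero by the combinatorial Nullstellensatz; by homogeneity,
dehomogenization loses no coefficient.
-/

open MvPolynomial Finset

/-- Reduce an exponent modulo `q-1`: unchanged if `≤ q-1`, otherwise the
representative in `{1,...,q-1}` congruent to it modulo `q-1`. -/
def redExp (q a : ℕ) : ℕ := if a ≤ q - 1 then a else (a - 1) % (q - 1) + 1

/-- Projective reduction of a monomial (given by its exponent vector): all exponents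
below the top variable of the support are reduced modulo `q-1`, and the difference is
transferred to the exponent of the top variable. -/
noncomputable def projRed (q : ℕ) {m : ℕ} (μ : Fin (m + 1) →₀ ℕ) : Fin (m + 1) →₀ ℕ :=
  if h : μ.support.Nonempty then
    letI ℓ := μ.support.max' h
    Finsupp.equivFunOnFinite.symm fun i =>
      if i < ℓ then redExp q (μ i)
      else if i = ℓ then μ ℓ + ∑ j ∈ Finset.univ.filter (· < ℓ), (μ j - redExp q (μ j))
      else 0
  else 0

/-- Projective reduction of a polynomial: the linear extension of projective
reduction of monomials. -/
noncomputable def polyRed (q : ℕ) {m : ℕ} {k : Type} [CommRing k]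
    (f : MvPolynomial (Fin (m + 1)) k) : MvPolynomial (Fin (m + 1)) k :=
  f.support.sum fun μ => monomial (projRed q μ) (coeff μ f)

/-- The ideal generated by the Fermat polynomials `X i ^ q * X j - X i * X j ^ q`. -/
noncomputable def fermatIdeal (q m : ℕ) (k : Type) [CommRing k] : Ideal (MvPolynomial (Fin (m + 1)) k) :=
  Ideal.span {f | ∃ i j : Fin (m + 1), i < j ∧ f = X i ^ q * X j - X i * X j ^ q}

/-- The leading exponent (exponent vector of the leading monomial) of a multivariate
polynomial with respect to a monomial order. -/
noncomputable def lmExp {σ : Type} (mo : MonomialOrder σ) {R : Type} [CommSemiring R]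
    (f : MvPolynomial σ R) : σ →₀ ℕ :=
  mo.toSyn.symm (f.support.sup fun μ => mo.toSyn μ)

theorem Finsupp.eq_of_erase_eq_of_degree_eq {σ : Type*} {ν μ : σ →₀ ℕ} {ℓ : σ}
    (he : ν.erase ℓ = μ.erase ℓ) (hd : ν.degree = μ.degree) : ν = μ := by
  have hdeg : ∀ ν : σ →₀ ℕ, ν.degree = (ν.erase ℓ).degree + ν ℓ := fun ν => by
    conv_lhs => rw [← erase_add_single ℓ ν]
    rw [map_add, degree_single]
  have hℓ : ν ℓ = μ ℓ := by rw [hdeg ν, hdeg μ, he] at hd; omega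
  rw [← erase_add_single ℓ ν, ← erase_add_single ℓ μ, he, hℓ]

theorem Finsupp.exists_lt_forall_mem_support_le {σ M : Type*} [LinearOrder σ] [Zero M]
    {μ : σ →₀ M} (hμ : μ ≠ 0) {ℓ : σ} (h : ∀ j ∈ μ.support, j < ℓ) :
    ∃ ℓ' < ℓ, ∀ j ∈ μ.support, j ≤ ℓ' :=
  have hne := support_nonempty_iff.mpr hμ
  ⟨μ.support.max' hne, h _ (μ.support.max'_mem hne), μ.support.le_max'⟩

theorem MvPolynomial.IsHomogeneous.degree_eq_of_mem_support {σ R : Type*} [CommSemiring R]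
    {φ : MvPolynomial σ R} {n : ℕ} (hφ : φ.IsHomogeneous n) {s : σ →₀ ℕ} (hs : s ∈ φ.support) :
    s.degree = n :=
  (Finsupp.degree_apply s).trans (hφ.degree_eq_sum_deg_support hs).symm

theorem MvPolynomial.exists_eq_of_mem_support_sum_monomial {σ R ι : Type*} [CommSemiring R]
    {s : Finset ι} {f : ι → σ →₀ ℕ} {c : ι → R} {κ : σ →₀ ℕ}
    (hκ : κ ∈ (∑ a ∈ s, monomial (f a) (c a)).support) : ∃ a ∈ s, f a = κ := by
  classical
  obtain ⟨a, ha, hκ⟩ := mem_biUnion.mp (support_sum hκ)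
  exact ⟨a, ha, (mem_singleton.mp (support_monomial_subset hκ)).symm⟩

theorem prod_eq_prod_Iio_mul {ι M : Type*} [LinearOrder ι] [Fintype ι] [LocallyFiniteOrderBot ι]
    [CommMonoid M] {f : ι → M} {ℓ : ι} (hf : ∀ i, ℓ < i → f i = 1) :
    ∏ i, f i = (∏ i ∈ Iio ℓ, f i) * f ℓ := by
  rw [prod_Iio_mul_eq_prod_Iic]
  exact (prod_subset (subset_univ _) fun i _ hi => hf i (not_le.mp (mem_Iic.not.mp hi))).symm

theorem redExp_lt {q : ℕ} (hq : 1 < q) (a : ℕ) : redExp q a < q := by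
  unfold redExp
  split_ifs
  · omega
  · have := Nat.mod_lt (a - 1) (show 0 < q - 1 by omega)
    omega

theorem exists_redExp_eq_succ {q a : ℕ} (ha : a ≠ 0) :
    ∃ r k, redExp q a = r + 1 ∧ a = r + 1 + k * (q - 1) := by
  unfold redExp
  split_ifs
  · exact ⟨a - 1, 0, by omega, by omega⟩
  · exact ⟨(a - 1) % (q - 1), (a - 1) / (q - 1), rfl,
      by have := Nat.mod_add_div' (a - 1) (q - 1); omega⟩

section CommMonoid

variable {M : Type*} [CommMonoid M]

theorem pow_add_mul_mul_eq_of_pow_succ_mul {x b : M} {c : ℕ}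
    (h : x ^ (c + 1) * b = x * b ^ (c + 1)) (n k : ℕ) :
    x ^ (n + 1 + k * c) * b = x ^ (n + 1) * b ^ (1 + k * c) := by
  induction k generalizing n with
  | zero => simp
  | succ k ih =>
    calc x ^ (n + 1 + (k + 1) * c) * b = x ^ (n + c + 1 + k * c) * b := by ring_nf
      _ = x ^ n * (x ^ (c + 1) * b) * b ^ (k * c) := by
          rw [ih]; simp only [pow_add, pow_one]; ac_rfl
      _ = x ^ (n + 1) * b ^ (1 + (k + 1) * c) := by
          rw [h]; simp only [add_mul, one_mul, pow_add, pow_one]; ac_rfl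

theorem pow_mul_pow_eq_pow_redExp_mul {x b : M} {q : ℕ} (h : x ^ q * b = x * b ^ q)
    (n : ℕ) {e : ℕ} (he : e ≠ 0) :
    x ^ n * b ^ e = x ^ redExp q n * b ^ (e + (n - redExp q n)) := by
  rcases eq_or_ne n 0 with rfl | hn
  · simp [redExp]
  obtain ⟨r, k, hr, rfl⟩ := exists_redExp_eq_succ (q := q) hn
  obtain ⟨e, rfl⟩ := Nat.exists_eq_succ_of_ne_zero he
  rw [hr, Nat.add_sub_cancel_left]
  cases q with
  | zero => simp
  | succ c =>
    rw [Nat.add_sub_cancel]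
    calc x ^ (r + 1 + k * c) * b ^ (e + 1) = x ^ (r + 1 + k * c) * b * b ^ e := by
          rw [pow_succ, mul_comm _ b, mul_assoc]
      _ = x ^ (r + 1) * b ^ (e + 1 + k * c) := by
          rw [pow_add_mul_mul_eq_of_pow_succ_mul h]
          simp only [pow_add, pow_one]; ac_rfl

theorem prod_pow_mul_pow_eq_prod_pow_redExp_mul {ι : Type*} (s : Finset ι) {x : ι → M} {b : M}
    {q : ℕ} (h : ∀ i ∈ s, x i ^ q * b = x i * b ^ q) (n : ι → ℕ) {e : ℕ} (he : e ≠ 0) :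
    (∏ i ∈ s, x i ^ n i) * b ^ e =
      (∏ i ∈ s, x i ^ redExp q (n i)) * b ^ (e + ∑ i ∈ s, (n i - redExp q (n i))) := by
  induction s using Finset.cons_induction generalizing e with
  | empty => simp
  | cons a s ha ih =>
    have hs : ∀ i ∈ s, x i ^ q * b = x i * b ^ q := fun i hi => h i (mem_cons_of_mem hi)
    set P := ∏ i ∈ s, x i ^ n i
    calc (∏ i ∈ cons a s ha, x i ^ n i) * b ^ e = P * (x a ^ n a * b ^ e) := by
          rw [prod_cons]; ac_rfl
      _ = x a ^ redExp q (n a) * (P * b ^ (e + (n a - redExp q (n a)))) := by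
          rw [pow_mul_pow_eq_pow_redExp_mul (h a (mem_cons_self a s)) _ he]; ac_rfl
      _ = _ := by
          rw [ih hs (by omega), prod_cons, sum_cons, ← add_assoc]; ac_rfl

end CommMonoid

section projRed

variable {q m : ℕ}

theorem projRed_apply {μ : Fin (m + 1) →₀ ℕ} (h : μ.support.Nonempty) (i : Fin (m + 1)) :
    projRed q μ i = if i < μ.support.max' h then redExp q (μ i)
      else if i = μ.support.max' h then
        μ (μ.support.max' h) + ∑ j ∈ Iio (μ.support.max' h), (μ j - redExp q (μ j))
      else 0 := by
  rw [projRed, dif_pos h, ← filter_gt_eq_Iio]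
  rfl

theorem projRed_zero : projRed q (0 : Fin (m + 1) →₀ ℕ) = 0 :=
  dif_neg (by simp)

theorem prod_pow_projRed {M : Type*} [CommMonoid M] {x : Fin (m + 1) → M}
    (hx : ∀ i j, i < j → x i ^ q * x j = x i * x j ^ q) (μ : Fin (m + 1) →₀ ℕ) :
    ∏ i, x i ^ projRed q μ i = ∏ i, x i ^ μ i := by
  rcases eq_or_ne μ 0 with rfl | hμ0
  · rw [projRed_zero]
  have h := Finsupp.support_nonempty_iff.mpr hμ0
  set ℓ := μ.support.max' h
  have hμ : ∀ j, ℓ < j → x j ^ μ j = 1 := fun j hj => by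
    rw [Finsupp.notMem_support_iff.mp fun hj' => not_lt.mpr (μ.support.le_max' j hj') hj,
      pow_zero]
  have hproj : ∀ j, ℓ < j → x j ^ projRed q μ j = 1 := fun j hj => by
    rw [projRed_apply h, if_neg (lt_asymm hj), if_neg hj.ne', pow_zero]
  have hμℓ : μ ℓ ≠ 0 := Finsupp.mem_support_iff.mp (μ.support.max'_mem h)
  rw [prod_eq_prod_Iio_mul hproj, prod_eq_prod_Iio_mul hμ,
    prod_pow_mul_pow_eq_prod_pow_redExp_mul _ (fun i hi => hx i ℓ (mem_Iio.mp hi)) _ hμℓ,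
    projRed_apply h, if_neg (lt_irrefl ℓ), if_pos rfl]
  congr 1
  exact prod_congr rfl fun i hi => by rw [projRed_apply h, if_pos (mem_Iio.mp hi)]

theorem degree_projRed (μ : Fin (m + 1) →₀ ℕ) : (projRed q μ).degree = μ.degree := by
  -- at `x i = 2` in `ℕ`, `prod_pow_projRed` compares total degrees
  have h := prod_pow_projRed (q := q) (x := fun _ => 2) (fun _ _ _ => mul_comm _ _) μ
  rw [prod_pow_eq_pow_sum, prod_pow_eq_pow_sum] at h
  rw [Finsupp.degree_eq_sum, Finsupp.degree_eq_sum]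
  exact Nat.pow_right_injective le_rfl h

theorem projRed_lt (hq : 1 < q) (μ : Fin (m + 1) →₀ ℕ) {i j : Fin (m + 1)} (hij : i < j)
    (hj : projRed q μ j ≠ 0) : projRed q μ i < q := by
  rcases eq_or_ne μ 0 with rfl | hμ0
  · simp [projRed_zero] at hj
  have h := Finsupp.support_nonempty_iff.mpr hμ0
  rw [projRed_apply h] at hj ⊢
  have hjℓ : j ≤ μ.support.max' h := by
    by_contra hc
    rw [if_neg (lt_asymm (not_le.mp hc)), if_neg (not_le.mp hc).ne'] at hj
    exact hj rfl
  rw [if_pos (hij.trans_le hjℓ)]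
  exact redExp_lt hq _

end projRed

section polyRed

variable {q m : ℕ} {k : Type} [CommRing k]

theorem fermatIdeal_le_ker_eval {x : Fin (m + 1) → k} (hx : ∀ i, x i ^ q = x i) :
    fermatIdeal q m k ≤ RingHom.ker (eval x) := by
  rw [fermatIdeal, Ideal.span_le]
  rintro _ ⟨i, j, -, rfl⟩
  simp [hx]

theorem mk_monomial_projRed (μ : Fin (m + 1) →₀ ℕ) (c : k) :
    Ideal.Quotient.mk (fermatIdeal q m k) (monomial (projRed q μ) c) =
      Ideal.Quotient.mk (fermatIdeal q m k) (monomial μ c) := by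
  simp only [monomial_eq, Finsupp.prod_pow, map_mul, map_prod, map_pow]
  refine congrArg _ (prod_pow_projRed (fun i j hij => ?_) μ)
  rw [← map_pow, ← map_mul, ← map_pow, ← map_mul, Ideal.Quotient.eq]
  exact Ideal.subset_span ⟨i, j, hij, rfl⟩

theorem mk_polyRed (F : MvPolynomial (Fin (m + 1)) k) :
    Ideal.Quotient.mk (fermatIdeal q m k) (polyRed q F) = Ideal.Quotient.mk _ F := by
  conv_rhs => rw [F.as_sum]
  simp only [polyRed, map_sum, mk_monomial_projRed]

theorem MvPolynomial.IsHomogeneous.polyRed {F : MvPolynomial (Fin (m + 1)) k} {d : ℕ}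
    (hF : F.IsHomogeneous d) : (polyRed q F).IsHomogeneous d :=
  IsHomogeneous.sum _ _ _ fun μ hμ => isHomogeneous_monomial _ <| by
    rw [degree_projRed, hF.degree_eq_of_mem_support hμ]

theorem lt_of_mem_support_polyRed (hq : 1 < q) {F : MvPolynomial (Fin (m + 1)) k}
    {ν : Fin (m + 1) →₀ ℕ} (hν : ν ∈ (polyRed q F).support) {i j : Fin (m + 1)} (hij : i < j)
    (hj : ν j ≠ 0) : ν i < q := by
  obtain ⟨μ, -, rfl⟩ := exists_eq_of_mem_support_sum_monomial hν
  exact projRed_lt hq μ hij hj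

end polyRed

section chartRestrict

variable {σ R : Type*} [LinearOrder σ] [CommSemiring R]

/-- `G` restricted to the coordinate subspace `x_j = 0` (`j > ℓ`) and dehomogenized at
`x_ℓ = 1`. -/
noncomputable def chartRestrict (ℓ : σ) (G : MvPolynomial σ R) : MvPolynomial σ R :=
  ∑ ν ∈ G.support with ∀ j ∈ ν.support, j ≤ ℓ, monomial (ν.erase ℓ) (coeff ν G)

theorem coeff_chartRestrict {G : MvPolynomial σ R} {d : ℕ} (hG : G.IsHomogeneous d) {ℓ : σ}
    {ν : σ →₀ ℕ} (hν : ν ∈ G.support) (hνℓ : ∀ j ∈ ν.support, j ≤ ℓ) :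
    coeff (ν.erase ℓ) (chartRestrict ℓ G) = coeff ν G := by
  rw [chartRestrict, coeff_sum, sum_eq_single ν]
  · rw [coeff_monomial, if_pos rfl]
  · intro μ hμ hμν
    rw [coeff_monomial, if_neg]
    refine fun he => hμν (Finsupp.eq_of_erase_eq_of_degree_eq he ?_)
    rw [hG.degree_eq_of_mem_support (mem_filter.mp hμ).1, hG.degree_eq_of_mem_support hν]
  · exact fun hν' => absurd (mem_filter.mpr ⟨hν, hνℓ⟩) hν'

theorem exists_of_mem_support_chartRestrict {G : MvPolynomial σ R} {ℓ : σ} {κ : σ →₀ ℕ}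
    (hκ : κ ∈ (chartRestrict ℓ G).support) :
    ∃ ν ∈ G.support, (∀ j ∈ ν.support, j ≤ ℓ) ∧ ν.erase ℓ = κ := by
  obtain ⟨ν, hν, rfl⟩ := exists_eq_of_mem_support_sum_monomial hκ
  exact ⟨ν, (mem_filter.mp hν).1, (mem_filter.mp hν).2, rfl⟩

theorem eval_chartRestrict [Fintype σ] (ℓ : σ) (G : MvPolynomial σ R) (y : σ → R) :
    eval y (chartRestrict ℓ G) =
      eval (fun i => if i < ℓ then y i else if i = ℓ then 1 else 0) G := by
  set x : σ → R := fun i => if i < ℓ then y i else if i = ℓ then 1 else 0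
  conv_rhs => rw [G.as_sum]
  rw [chartRestrict, sum_filter, map_sum, map_sum]
  refine sum_congr rfl fun ν _ => ?_
  simp only [apply_ite (eval y), eval_monomial, Finsupp.prod_pow, map_zero]
  split_ifs with hνℓ
  · refine congrArg _ (prod_congr rfl fun i _ => ?_)
    rcases lt_trichotomy i ℓ with h | rfl | h
    · simp [x, h, Finsupp.erase_ne h.ne]
    · simp [x]
    · have hνi : ν i = 0 := Finsupp.notMem_support_iff.mp fun hi => not_lt.mpr (hνℓ i hi) h
      simp [x, h.ne', lt_asymm h, hνi, Finsupp.erase_ne h.ne']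
  · obtain ⟨j, hνj, hj⟩ : ∃ j, ν j ≠ 0 ∧ ℓ < j := by simpa using hνℓ
    refine (mul_eq_zero_of_right _ (prod_eq_zero (mem_univ j) ?_)).symm
    simp [x, lt_asymm hj, hj.ne', zero_pow hνj]

end chartRestrict

section FiniteField

variable {Fq k : Type*} [Field Fq] [Fintype Fq] [Field k] [Algebra Fq k]
  {σ : Type*} [LinearOrder σ] [Fintype σ]

theorem chartRestrict_eq_zero {G : MvPolynomial σ k} {ℓ : σ}
    (hred : ∀ ν ∈ G.support, (∀ j ∈ ν.support, j ≤ ℓ) → ∀ i < ℓ, ν i < Fintype.card Fq)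
    (hv : ∀ x : σ → Fq, x ℓ = 1 → (∀ j, ℓ < j → x j = 0) →
      eval (fun i => algebraMap Fq k (x i)) G = 0) :
    chartRestrict ℓ G = 0 := by
  classical
  refine eq_zero_of_eval_zero_at_prod_finset _ (fun _ => univ.image (algebraMap Fq k))
    (fun i => ?_) fun y hy => ?_
  · rw [card_image_of_injective _ (algebraMap Fq k).injective, card_univ,
      degreeOf_lt_iff Fintype.card_pos]
    intro κ hκ
    obtain ⟨ν, hνG, hνℓ, rfl⟩ := exists_of_mem_support_chartRestrict hκ
    rcases lt_trichotomy i ℓ with h | rfl | h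
    · rw [Finsupp.erase_ne h.ne]
      exact hred ν hνG hνℓ i h
    · rw [Finsupp.erase_same]
      exact Fintype.card_pos
    · rw [Finsupp.erase_ne h.ne',
        Finsupp.notMem_support_iff.mp fun hi => not_lt.mpr (hνℓ i hi) h]
      exact Fintype.card_pos
  · choose z hz using fun i => mem_image.mp (hy i)
    have hpt : (fun i => if i < ℓ then y i else if i = ℓ then 1 else 0) =
        fun i => algebraMap Fq k (if i < ℓ then z i else if i = ℓ then 1 else 0) := by
      funext i
      split_ifs <;> simp [hz]
    rw [eval_chartRestrict, hpt]
    exact hv _ (by simp) fun j hj => by simp [lt_asymm hj, hj.ne']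

theorem eq_zero_of_isHomogeneous_of_eval_eq_zero [Nonempty σ] {G : MvPolynomial σ k} {d : ℕ}
    (hG : G.IsHomogeneous d)
    (hred : ∀ ν ∈ G.support, ∀ i j, i < j → ν j ≠ 0 → ν i < Fintype.card Fq)
    (hv : ∀ x : σ → Fq, x ≠ 0 → eval (fun i => algebraMap Fq k (x i)) G = 0) :
    G = 0 := by
  suffices h : ∀ ℓ ν, (∀ j ∈ ν.support, j ≤ ℓ) → coeff ν G = 0 from
    MvPolynomial.ext _ _ fun ν => (h (univ.max' univ_nonempty) ν fun j _ =>
      le_max' _ j (mem_univ j)).trans (coeff_zero ν).symm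
  intro ℓ
  induction ℓ using WellFoundedLT.induction with
  | _ ℓ IH =>
  intro ν hνℓ
  by_contra hν
  have hredℓ : ∀ μ ∈ G.support, (∀ j ∈ μ.support, j ≤ ℓ) → ∀ i < ℓ, μ i < Fintype.card Fq := by
    intro μ hμ hμℓ i hi
    by_cases hμ0 : μ = 0
    · simp [hμ0, Fintype.card_pos]
    refine hred μ hμ i ℓ hi fun h0 => ?_
    -- without `x_ℓ`, the monomial `μ` lies below some `ℓ' < ℓ`, where the induction kills it
    have hlt : ∀ j ∈ μ.support, j < ℓ := fun j hj =>
      (hμℓ j hj).lt_of_ne fun h => Finsupp.mem_support_iff.mp hj (h ▸ h0)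
    obtain ⟨ℓ', hℓ', hμℓ'⟩ := Finsupp.exists_lt_forall_mem_support_le hμ0 hlt
    exact mem_support_iff.mp hμ (IH ℓ' hℓ' μ hμℓ')
  have hchart := chartRestrict_eq_zero hredℓ fun x hx _ =>
    hv x fun h => one_ne_zero (hx.symm.trans (congrFun h ℓ))
  rw [← coeff_chartRestrict hG (mem_support_iff.mpr hν) hνℓ, hchart, coeff_zero] at hν
  exact hν rfl

end FiniteField

theorem vanishing_ideal_eq_fermatIdeal_general (q m : ℕ)
    (Fq : Type) [Field Fq] [Fintype Fq] (hq : Fintype.card Fq = q)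
    (k : Type) [Field k] [Algebra Fq k] :
    Ideal.span {F : MvPolynomial (Fin (m + 1)) k |
        (∃ d, F.IsHomogeneous d) ∧
        ∀ x : Fin (m + 1) → Fq, x ≠ 0 →
          MvPolynomial.eval (fun i => algebraMap Fq k (x i)) F = 0}
      = fermatIdeal q m k := by
  subst hq
  have hfix (x : Fin (m + 1) → Fq) (i : Fin (m + 1)) :
      algebraMap Fq k (x i) ^ Fintype.card Fq = algebraMap Fq k (x i) := by
    rw [← map_pow, FiniteField.pow_card]
  apply le_antisymm
  · rw [Ideal.span_le]
    rintro F ⟨⟨d, hF⟩, hFv⟩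
    have hGF : polyRed (Fintype.card Fq) F - F ∈ fermatIdeal (Fintype.card Fq) m k :=
      Ideal.Quotient.eq.mp (mk_polyRed F)
    have hG : polyRed (Fintype.card Fq) F = 0 := by
      refine eq_zero_of_isHomogeneous_of_eval_eq_zero hF.polyRed
        (fun _ hν _ _ => lt_of_mem_support_polyRed Fintype.one_lt_card hν) fun x hx => ?_
      have := fermatIdeal_le_ker_eval (hfix x) hGF
      rwa [RingHom.mem_ker, map_sub, hFv x hx, sub_zero] at this
    simpa [hG] using hGF
  · rw [fermatIdeal, Ideal.span_le]
    rintro _ ⟨i, j, hij, rfl⟩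
    refine Ideal.subset_span ⟨⟨_, ((isHomogeneous_X_pow i _).mul (isHomogeneous_X k j)).sub ?_⟩,
      fun x _ => fermatIdeal_le_ker_eval (hfix x) (Ideal.subset_span ⟨i, j, hij, rfl⟩)⟩
    simpa [add_comm] using (isHomogeneous_X k i).mul (isHomogeneous_X_pow j _)

/-- For an algebraic extension `k` of `F_q`, the vanishing ideal over `k` of the set of
`F_q`-rational points of `P^m(k)` (the ideal generated by homogeneous polynomials vanishing
at every `F_q`-point) is the ideal generated by the Fermat polynomials. -/
theorem vanishing_ideal_eq_fermatIdeal (q m : ℕ)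
    (Fq : Type) [Field Fq] [Fintype Fq] (hq : Fintype.card Fq = q)
    (k : Type) [Field k] [Algebra Fq k] [Algebra.IsAlgebraic Fq k] :
    Ideal.span {F : MvPolynomial (Fin (m + 1)) k |
        (∃ d, F.IsHomogeneous d) ∧
        ∀ x : Fin (m + 1) → Fq, x ≠ 0 →
          MvPolynomial.eval (fun i => algebraMap Fq k (x i)) F = 0}
      = fermatIdeal q m k :=
  vanishing_ideal_eq_fermatIdeal_general q m Fq hq k
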